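/- arXiv:2301.13563 — 9 statements merged into one kernel-verified Lean document; each statement's English description precedes it below -/
import Mathlib

section
/- Every natural number N has a base-3/2 representation: there exists a finite list of digits ds, each digit being 0, 1, or 2, such that N = Σ_{i < len(ds)} ds[i]·(3/2)^i (as an identity in the rationals, with ds[i] the coefficient of (3/2)^i). -/
/-- `ds` is a base-3/2 representation of the natural number `N`:
a finite little-endian list of digits, each at most 2, whose weighted
sum with weights `(3/2)^i` equals `N`. -/
def IsBase32Rep (N : ℕ) (ds : List ℕ) : Prop :=
  (∀ d ∈ ds, d ≤ 2) ∧
    (N : ℚ) = ∑ i ∈ Finset.range ds.length, (ds.getD i 0 : ℚ) * (3 / 2 : ℚ) ^ i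

lemma cons_sum (d : ℕ) (ds : List ℕ) :
    ∑ i ∈ Finset.range (d :: ds).length, ((d :: ds).getD i 0 : ℚ) * (3 / 2 : ℚ) ^ i
      = (d : ℚ) + (3 / 2) * ∑ i ∈ Finset.range ds.length, (ds.getD i 0 : ℚ) * (3 / 2 : ℚ) ^ i := by
  rw [List.length_cons, Finset.sum_range_succ', Finset.mul_sum]
  simp [pow_succ, mul_comm, mul_assoc, mul_left_comm, add_comm]

/-- Every natural number has a base-3/2 representation. -/
theorem exists_base32_rep (N : ℕ) : ∃ ds : List ℕ, IsBase32Rep N ds := by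
  induction N using Nat.strong_induction_on with
  | _ N ih =>
    rcases Nat.eq_zero_or_pos N with h0 | h0
    · exact ⟨[], by simp [IsBase32Rep, h0]⟩
    · have hlt : 2 * (N / 3) < N := by omega
      obtain ⟨ds, hds, hsum⟩ := ih (2 * (N / 3)) hlt
      refine ⟨N % 3 :: ds, ?_, ?_⟩
      · intro d hd
        rw [List.mem_cons] at hd
        rcases hd with rfl | h
        · omega
        · exact hds d h
      · rw [cons_sum, ← hsum]
        have hN : N * 2 = (N % 3) * 2 + 3 * (2 * (N / 3)) := by omega
        have hq : (N : ℚ) * 2 = ((N % 3 : ℕ) : ℚ) * 2 + 3 * ((2 * (N / 3) : ℕ) : ℚ) := by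
          exact_mod_cast hN
        linarith
end

section
/- The base-3/2 representation of a natural number is unique up to leading zeros: if ds and ds' are two base-3/2 representations of the same natural number N, both with all digits at most 2, and neither list has a trailing zero entry (i.e., in big-endian notation neither has a leading zero digit), then ds = ds'. -/
def base32Value : List ℕ → ℚ
  | [] => 0
  | d :: t => d + 3 / 2 * base32Value t

theorem base32Value_eq_sum (ds : List ℕ) :
    base32Value ds = ∑ i ∈ Finset.range ds.length, (ds.getD i 0 : ℚ) * (3 / 2 : ℚ) ^ i := by
  induction ds with
  | nil => rfl
  | cons d t ih =>
    rw [base32Value, ih, List.length_cons, Finset.sum_range_succ', Finset.mul_sum, add_comm]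
    simp only [List.getD_cons_succ, List.getD_cons_zero, pow_succ]
    congr 1
    · exact Finset.sum_congr rfl fun i _ => by ring
    · ring

theorem exists_int_eq_two_pow_length_mul_base32Value (ds : List ℕ) :
    ∃ A : ℤ, (A : ℚ) = 2 ^ ds.length * base32Value ds := by
  induction ds with
  | nil => exact ⟨0, by simp [base32Value]⟩
  | cons d t ih =>
    obtain ⟨A, hA⟩ := ih
    refine ⟨2 ^ (t.length + 1) * d + 3 * A, ?_⟩
    rw [base32Value, List.length_cons]
    push_cast
    rw [hA]
    ring

theorem getLast?_ne_some_of_cons {α : Type*} {a b : α} {l : List α}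
    (h : (b :: l).getLast? ≠ some a) : l.getLast? ≠ some a := by
  cases l with
  | nil => simp
  | cons c l => rwa [List.getLast?_cons_cons] at h

theorem base32Value_pos {ds : List ℕ} (hne : ds ≠ []) (hz : ds.getLast? ≠ some 0) :
    0 < base32Value ds := by
  induction ds with
  | nil => exact absurd rfl hne
  | cons d t ih =>
    rw [base32Value]
    rcases eq_or_ne t [] with rfl | ht
    · have hd : d ≠ 0 := fun h => hz (by simp [h])
      simp only [base32Value, mul_zero, add_zero, Nat.cast_pos]
      omega
    · have := ih ht (getLast?_ne_some_of_cons hz)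
      positivity

theorem three_dvd_sub_of_base32Value_cons_eq {d d' : ℕ} {t t' : List ℕ}
    (h : base32Value (d :: t) = base32Value (d' :: t')) : (3 : ℤ) ∣ d - d' := by
  obtain ⟨A, hA⟩ := exists_int_eq_two_pow_length_mul_base32Value t
  obtain ⟨B, hB⟩ := exists_int_eq_two_pow_length_mul_base32Value t'
  set n := t.length
  set n' := t'.length
  have key : (2 : ℤ) ^ (n + n' + 1) * (d - d') = 3 * (2 ^ n * B - 2 ^ n' * A) := by
    simp only [base32Value] at h
    have : (2 : ℚ) ^ (n + n' + 1) * (d - d') = 3 * (2 ^ n * B - 2 ^ n' * A) := by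
      rw [hA, hB, show (d : ℚ) - d' = 3 / 2 * base32Value t' - 3 / 2 * base32Value t by linarith]
      ring
    exact_mod_cast this
  have hcop : IsCoprime (3 : ℤ) (2 ^ (n + n' + 1)) :=
    IsCoprime.pow_right (by norm_num [Int.isCoprime_iff_gcd_eq_one])
  exact hcop.dvd_of_dvd_mul_left ⟨_, key⟩

theorem base32Value_injOn {ds ds' : List ℕ} (hd : ∀ d ∈ ds, d ≤ 2) (hd' : ∀ d ∈ ds', d ≤ 2)
    (hz : ds.getLast? ≠ some 0) (hz' : ds'.getLast? ≠ some 0)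
    (h : base32Value ds = base32Value ds') : ds = ds' := by
  induction ds generalizing ds' with
  | nil =>
    cases ds' with
    | nil => rfl
    | cons d' t' => exact absurd h (base32Value_pos (List.cons_ne_nil d' t') hz').ne
  | cons d t ih =>
    cases ds' with
    | nil => exact absurd h (base32Value_pos (List.cons_ne_nil d t) hz).ne'
    | cons d' t' =>
      have hdd : d = d' := by
        have := three_dvd_sub_of_base32Value_cons_eq h
        have := hd d (by simp)
        have := hd' d' (by simp)
        omega
      subst hdd
      have ht : base32Value t = base32Value t' := by
        simp only [base32Value] at h
        linarith
      rw [ih (fun x hx => hd x (by simp [hx])) (fun x hx => hd' x (by simp [hx]))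
        (getLast?_ne_some_of_cons hz) (getLast?_ne_some_of_cons hz') ht]

/-- The base-3/2 representation of a natural number is unique, provided
neither representation has a trailing zero (i.e., no leading zero digit
in big-endian notation). -/
theorem base32_rep_unique (N : ℕ) (ds ds' : List ℕ)
    (h : IsBase32Rep N ds) (h' : IsBase32Rep N ds')
    (hz : ds.getLast? ≠ some 0) (hz' : ds'.getLast? ≠ some 0) :
    ds = ds' := by
  refine base32Value_injOn h.1 h'.1 hz hz' ?_
  rw [base32Value_eq_sum, base32Value_eq_sum, ← h.2, ← h'.2]
end

section
/- Let T : ℕ → ℕ be defined by T(N) = s(N) mod 2, where s(0) = 0 and s(N) = (N mod 3) + s(2·⌊N/3⌋) for N ≥ 1 (so s is the sum-of-digits function of base 3/2, and T is the base-3/2 Thue–Morse sequence). Then T(0) = 0 and for every natural number k: T(3k) = T(2k), T(3k + 1) = (T(2k) + 1) mod 2, and T(3k + 2) = T(2k). Equivalently, T is the fixed point starting with 0 of the 2-3-block substitution κ on {0,1} given by κ(00) = 010, κ(01) = 010, κ(10) = 101, κ(11) = 101. -/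
/-- The sum-of-digits function of base 3/2. -/
def s : ℕ → ℕ
  | 0 => 0
  | (N + 1) => ((N + 1) % 3) + s (2 * ((N + 1) / 3))
decreasing_by omega

/-- The base-3/2 Thue–Morse sequence. -/
def T (N : ℕ) : ℕ := s N % 2

/-- `T 0 = 0` and for all `k`: `T (3k) = T (2k)`, `T (3k+1) = (T (2k) + 1) % 2`,
`T (3k+2) = T (2k)`; i.e., `T` is the fixed point starting with `0` of the
2-3-block substitution `κ` on `{0,1}` given by `κ(00) = 010`, `κ(01) = 010`,
`κ(10) = 101`, `κ(11) = 101`. -/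
theorem thueMorse32_fixedPoint :
    T 0 = 0 ∧
      ∀ k : ℕ,
        T (3 * k) = T (2 * k) ∧
        T (3 * k + 1) = (T (2 * k) + 1) % 2 ∧
        T (3 * k + 2) = T (2 * k) := by
  have hs : ∀ N : ℕ, N ≠ 0 → s N = N % 3 + s (2 * (N / 3)) := by
    intro N hN
    cases N with
    | zero => exact absurd rfl hN
    | succ n => rw [s]
  refine ⟨by simp [T, s], fun k => ?_⟩
  have h0 : s (3 * k) = s (2 * k) := by
    cases k with
    | zero => rfl
    | succ n =>
      rw [hs (3 * (n+1)) (by omega)]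
      have : 3 * (n+1) % 3 = 0 := by omega
      have h2 : 3 * (n+1) / 3 = n + 1 := by omega
      rw [this, h2, Nat.zero_add]
  have h1 : s (3 * k + 1) = 1 + s (2 * k) := by
    rw [hs (3 * k + 1) (by omega)]
    have : (3 * k + 1) % 3 = 1 := by omega
    have h2 : (3 * k + 1) / 3 = k := by omega
    rw [this, h2]
  have h2' : s (3 * k + 2) = 2 + s (2 * k) := by
    rw [hs (3 * k + 2) (by omega)]
    have : (3 * k + 2) % 3 = 2 := by omega
    have h2 : (3 * k + 2) / 3 = k := by omega
    rw [this, h2]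
  refine ⟨by simp [T, h0], ?_, ?_⟩ <;> simp [T, h1, h2'] <;> omega
end

section
/- The base-3/2 Thue–Morse sequence T is mirror invariant: if a word w occurs in T, then its binary complement w* (obtained by replacing each letter 0 by 1 and each letter 1 by 0) also occurs in T. Precisely: for every position m and every length L, there exists a position m' such that for all i < L, T(m' + i) = 1 − T(m + i). -/
def dropDigit (n : ℕ) : ℕ := 2 * (n / 3)

theorem s_eq_mod_add_s_dropDigit (n : ℕ) : s n = n % 3 + s (dropDigit n) := by
  cases n <;> simp [s, dropDigit]

theorem s_add_three_pow_mul (k a n : ℕ) :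
    s (n + 3 ^ k * a) + s (dropDigit^[k] n) = s n + s (dropDigit^[k] n + 2 ^ k * a) := by
  induction k generalizing a n with
  | zero => simp [add_comm]
  | succ k ih =>
    have hstep : s (n + 3 ^ (k + 1) * a) = n % 3 + s (dropDigit n + 3 ^ k * (2 * a)) := by
      obtain ⟨c, hc⟩ : ∃ c, 3 ^ (k + 1) * a = 3 * c ∧ 3 ^ k * (2 * a) = 2 * c :=
        ⟨3 ^ k * a, by ring, by ring⟩
      rw [hc.1, hc.2, s_eq_mod_add_s_dropDigit, dropDigit, dropDigit]
      congr 1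
      · omega
      · congr 1; omega
    have hrest := ih (2 * a) (dropDigit n)
    rw [show 2 ^ k * (2 * a) = 2 ^ (k + 1) * a by ring] at hrest
    rw [Function.iterate_succ_apply, hstep, s_eq_mod_add_s_dropDigit n]
    omega

theorem dropDigit_iterate_eq_zero {k n : ℕ} (h : n ≤ k) : dropDigit^[k] n = 0 := by
  induction k generalizing n with
  | zero => simp_all
  | succ k ih => exact ih (by simp only [dropDigit]; omega)

theorem s_add_three_pow_mul_of_le {k n : ℕ} (a : ℕ) (h : n ≤ k) :
    s (n + 3 ^ k * a) = s n + s (2 ^ k * a) := by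
  have := s_add_three_pow_mul k a n
  rw [dropDigit_iterate_eq_zero h, zero_add] at this
  simpa [s] using this

theorem exists_dvd_mul_add_one {a b : ℕ} [NeZero b] (h : a.Coprime b) : ∃ u, b ∣ a * u + 1 := by
  refine ⟨((-(ZMod.unitOfCoprime a h)⁻¹ : (ZMod b)ˣ) : ZMod b).val, ?_⟩
  rw [← ZMod.natCast_eq_zero_iff]
  have hinv := (ZMod.unitOfCoprime a h).mul_inv
  rw [ZMod.coe_unitOfCoprime] at hinv
  push_cast [ZMod.natCast_zmod_val, Units.val_neg, mul_neg, hinv]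
  ring

theorem exists_s_two_pow_mul_odd {k : ℕ} (hk : 1 ≤ k) : ∃ a, s (2 ^ k * a) % 2 = 1 := by
  obtain ⟨u, v, huv⟩ := exists_dvd_mul_add_one (Nat.Coprime.pow k k (by decide : Nat.Coprime 3 2))
  have hv : s (2 ^ k * v) = 1 + s (2 ^ k * u) := by
    rw [← huv, add_comm, s_add_three_pow_mul_of_le u hk]
    simp [s]
  by_cases hu : s (2 ^ k * u) % 2 = 1
  · exact ⟨u, hu⟩
  · exact ⟨v, by omega⟩

/-- `T` is mirror invariant: whenever a word occurs in `T`, its binary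
complement also occurs in `T`. -/
theorem thueMorse32_mirror_invariant (m L : ℕ) :
    ∃ m' : ℕ, ∀ i < L, T (m' + i) = 1 - T (m + i) := by
  obtain ⟨a, ha⟩ := exists_s_two_pow_mul_odd (k := m + L + 1) (by omega)
  refine ⟨m + 3 ^ (m + L + 1) * a, fun i hi => ?_⟩
  have hshift := s_add_three_pow_mul_of_le (k := m + L + 1) (n := m + i) a (by omega)
  rw [add_right_comm, T, T, hshift]
  omega
end

section
/- The base-1/2·3/2 representation of a natural number N ≥ 1 is unique: if ds and ds' are two base-1/2·3/2 representations of the same natural number N ≥ 1, both with all digits at most 2 and neither having a trailing zero entry (no leading zero digit in big-endian notation), then ds = ds'. -/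
/-!
Reading off the lowest digit: if `N = d/2 + (3/2)·v` where `v` is the value of the remaining
digits, then `3v = 2N - d` and `2^L v` are both integers, and `3`, `2^L` are coprime, so `v` is
a natural number `M` with `2N = d + 3M`. As `d ≤ 2`, this equation determines `d` and `M`, and the
remaining digits form a representation of `M`; induct on the list. In the base case, all digits of a
representation of `0` vanish, so without a trailing zero it is empty.
-/

/-- `ds` is a base-1/2·3/2 representation of the natural number `N`
(the representation of Akiyama, Frougny, and Sakarovitch with p = 3, q = 2):
a finite little-endian list of digits, each at most 2, with
`N = Σ ds[i] · (1/2) · (3/2)^i`. -/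
def IsAFSRep (N : ℕ) (ds : List ℕ) : Prop :=
  (∀ d ∈ ds, d ≤ 2) ∧
    (N : ℚ) = ∑ i ∈ Finset.range ds.length,
      (ds.getD i 0 : ℚ) * (1 / 2 : ℚ) * (3 / 2 : ℚ) ^ i

theorem Rat.exists_int_eq_of_mul_eq_int {p r : ℤ} (hpr : IsCoprime p r) {q : ℚ} {a b : ℤ}
    (ha : p * q = a) (hb : r * q = b) : ∃ m : ℤ, q = m := by
  obtain ⟨u, v, huv⟩ := hpr
  refine ⟨u * a + v * b, ?_⟩
  calc q = ((u * p + v * r : ℤ) : ℚ) * q := by rw [huv]; simp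
    _ = _ := by push_cast [← ha, ← hb]; ring

def afsValue (ds : List ℕ) : ℚ :=
  ∑ i ∈ Finset.range ds.length, (ds.getD i 0 : ℚ) * (1 / 2 : ℚ) * (3 / 2 : ℚ) ^ i

@[simp]
theorem afsValue_nil : afsValue [] = 0 := by simp [afsValue]

theorem afsValue_cons (d : ℕ) (ds : List ℕ) :
    afsValue (d :: ds) = d / 2 + 3 / 2 * afsValue ds := by
  rw [afsValue, afsValue, List.length_cons, Finset.sum_range_succ', Finset.mul_sum, add_comm]
  simp only [List.getD_cons_succ, List.getD_cons_zero, pow_succ, pow_zero]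
  congr 1
  · ring
  · exact Finset.sum_congr rfl fun i _ => by ring

theorem afsValue_nonneg (ds : List ℕ) : 0 ≤ afsValue ds :=
  Finset.sum_nonneg fun _ _ => by positivity

theorem exists_two_pow_length_mul_afsValue_eq (ds : List ℕ) :
    ∃ n : ℕ, 2 ^ ds.length * afsValue ds = n := by
  induction ds with
  | nil => exact ⟨0, by simp⟩
  | cons d ds ih =>
    obtain ⟨n, hn⟩ := ih
    refine ⟨d * 2 ^ ds.length + 3 * n, ?_⟩
    rw [afsValue_cons, List.length_cons]
    push_cast [← hn]
    ring

namespace IsAFSRep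

theorem eq_zero_of_nil {N : ℕ} (h : IsAFSRep N []) : N = 0 := by
  exact_mod_cast (h.2.trans afsValue_nil)

theorem exists_tail {N d : ℕ} {ds : List ℕ} (h : IsAFSRep N (d :: ds)) :
    ∃ M : ℕ, IsAFSRep M ds ∧ 2 * N = d + 3 * M := by
  have hval : (N : ℚ) = d / 2 + 3 / 2 * afsValue ds := h.2.trans (afsValue_cons d ds)
  obtain ⟨n, hn⟩ := exists_two_pow_length_mul_afsValue_eq ds
  have hcop : IsCoprime (3 : ℤ) (2 ^ ds.length) := (Int.isCoprime_iff_gcd_eq_one.2 rfl).pow_right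
  obtain ⟨m, hm⟩ := Rat.exists_int_eq_of_mul_eq_int hcop (q := afsValue ds)
    (a := 2 * N - d) (b := n) (by push_cast; linarith) (by exact_mod_cast hn)
  obtain ⟨M, rfl⟩ := Int.eq_ofNat_of_zero_le (by exact_mod_cast hm ▸ afsValue_nonneg ds : 0 ≤ m)
  refine ⟨M, ⟨fun x hx => h.1 x (List.mem_cons_of_mem d hx), by exact_mod_cast hm.symm⟩, ?_⟩
  have : ((2 * N : ℕ) : ℚ) = ((d + 3 * M : ℕ) : ℚ) := by push_cast at hm ⊢; linarith
  exact_mod_cast this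

theorem eq_zero_of_mem {ds : List ℕ} {d : ℕ} (h : IsAFSRep 0 ds) (hd : d ∈ ds) : d = 0 := by
  induction ds with
  | nil => simp at hd
  | cons e ds ih =>
    obtain ⟨M, hM, heM⟩ := h.exists_tail
    obtain ⟨rfl, rfl⟩ : e = 0 ∧ M = 0 := by omega
    rcases List.mem_cons.1 hd with rfl | hd
    · rfl
    · exact ih hM hd

theorem eq_nil_of_zero {ds : List ℕ} (h : IsAFSRep 0 ds) (hz : ds.getLast? ≠ some 0) : ds = [] := by
  by_contra hne
  rw [List.getLast?_eq_some_getLast hne] at hz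
  exact hz (congrArg some (h.eq_zero_of_mem (List.getLast_mem hne)))

end IsAFSRep

theorem List.getLast?_ne_of_cons {α : Type*} {a b : α} {l : List α} (h : (a :: l).getLast? ≠ some b) :
    l.getLast? ≠ some b := by
  cases l with
  | nil => simp
  | cons c l => rwa [List.getLast?_cons_cons] at h

theorem afs_rep_unique_general (N : ℕ) (ds ds' : List ℕ)
    (h : IsAFSRep N ds) (h' : IsAFSRep N ds')
    (hz : ds.getLast? ≠ some 0) (hz' : ds'.getLast? ≠ some 0) :
    ds = ds' := by
  induction ds generalizing N ds' with
  | nil =>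
    obtain rfl := h.eq_zero_of_nil
    exact (h'.eq_nil_of_zero hz').symm
  | cons d ds ih =>
    cases ds' with
    | nil =>
      obtain rfl := h'.eq_zero_of_nil
      exact h.eq_nil_of_zero hz
    | cons d' ds' =>
      obtain ⟨M, hM, hdM⟩ := h.exists_tail
      obtain ⟨M', hM', hdM'⟩ := h'.exists_tail
      obtain ⟨rfl, rfl⟩ : d = d' ∧ M = M' := by
        have hd := h.1 d List.mem_cons_self
        have hd' := h'.1 d' List.mem_cons_self
        omega
      rw [ih M ds' hM hM' (List.getLast?_ne_of_cons hz) (List.getLast?_ne_of_cons hz')]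

/-- The base-1/2·3/2 representation of a natural number `N ≥ 1` is unique,
provided neither representation has a trailing zero entry. -/
theorem afs_rep_unique (N : ℕ) (hN : 1 ≤ N) (ds ds' : List ℕ)
    (h : IsAFSRep N ds) (h' : IsAFSRep N ds')
    (hz : ds.getLast? ≠ some 0) (hz' : ds'.getLast? ≠ some 0) :
    ds = ds' :=
  afs_rep_unique_general N ds ds' h h' hz hz'
end

section
/- Let s : ℕ → ℕ be defined by s(0) = 0 and s(N) = (N mod 3) + s(2·⌊N/3⌋) for N ≥ 1 (the sum-of-digits function of base 3/2). For every natural number N ≥ 1 and every base-1/2·3/2 representation ds of N with all digits at most 2, the sum of the entries of ds equals s(2N). That is, the sum-of-digits function of the base-1/2·3/2 representation of N equals the sum-of-digits function of the base-3/2 representation of 2N. -/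
/-!
Doubling a base-1/2·3/2 representation of `N` gives an ordinary base-3/2 representation
`2N = Σ dᵢ (3/2)ⁱ` with digits `dᵢ ≤ 2`. Such a representation of a natural number `n` is forced
to be the one computed by `s`: from `n = d₀ + (3/2) v`, where `v` has a power of two as
denominator, one gets `3 ∣ n - d₀`, so `d₀ = n % 3` and the tail represents `v = 2 ⌊n / 3⌋`.
-/

theorem Nat.ofDigits_eq_sum_range_getD {α : Type*} [Semiring α] (b : α) (L : List ℕ) :
    Nat.ofDigits b L = ∑ i ∈ Finset.range L.length, (L.getD i 0 : α) * b ^ i := by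
  induction L with
  | nil => simp [Nat.ofDigits]
  | cons d L ih =>
    simp only [Nat.ofDigits, ih, List.length_cons, Finset.sum_range_succ', List.getD_cons_succ,
      List.getD_cons_zero, Finset.mul_sum, pow_zero, mul_one]
    rw [add_comm]
    congr 1
    refine Finset.sum_congr rfl fun i _ => ?_
    rw [_root_.pow_succ', ← mul_assoc, ← mul_assoc, (Nat.cast_commute _ b).eq]

theorem s_eq_mod_add (n : ℕ) : s n = n % 3 + s (2 * (n / 3)) := by
  cases n with
  | zero => simp [s]
  | succ k => rw [s]

theorem exists_natCast_eq_two_pow_mul_ofDigits (L : List ℕ) :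
    ∃ m : ℕ, (m : ℚ) = 2 ^ L.length * Nat.ofDigits (3 / 2 : ℚ) L := by
  induction L with
  | nil => exact ⟨0, by simp [Nat.ofDigits]⟩
  | cons d L ih =>
    obtain ⟨m, hm⟩ := ih
    refine ⟨d * 2 ^ (L.length + 1) + 3 * m, ?_⟩
    simp only [Nat.ofDigits, List.length_cons]
    push_cast
    rw [hm]
    ring

theorem mod_three_eq_and_of_natCast_eq_ofDigits_cons {n d : ℕ} {L : List ℕ} (hd : d ≤ 2)
    (h : (n : ℚ) = Nat.ofDigits (3 / 2 : ℚ) (d :: L)) :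
    n % 3 = d ∧ ((2 * (n / 3) : ℕ) : ℚ) = Nat.ofDigits (3 / 2 : ℚ) L := by
  obtain ⟨m, hm⟩ := exists_natCast_eq_two_pow_mul_ofDigits L
  have hnat : (2 * n) * 2 ^ L.length = (2 * d) * 2 ^ L.length + 3 * m := by
    have hq : ((2 * n) * 2 ^ L.length : ℚ) = (2 * d) * 2 ^ L.length + 3 * m := by
      simp only [Nat.ofDigits] at h
      rw [h, hm]
      ring
    exact_mod_cast hq
  have hdvd_mul : (3 : ℤ) ∣ (2 * n - 2 * d) * 2 ^ L.length := ⟨m, by linarith [hnat]⟩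
  have hdvd : (3 : ℤ) ∣ 2 * n - 2 * d := (Int.prime_three.dvd_mul.mp hdvd_mul).resolve_right
    fun h2 => absurd (Int.prime_three.dvd_of_dvd_pow h2) (by norm_num)
  have hmod : n % 3 = d := by omega
  refine ⟨hmod, ?_⟩
  have hn : ((3 * (n / 3) + d : ℕ) : ℚ) = n := by congr 1; omega
  simp only [Nat.ofDigits] at h
  push_cast at hn ⊢
  linarith

theorem sum_eq_s_of_natCast_eq_ofDigits {L : List ℕ} (hL : ∀ d ∈ L, d ≤ 2) {n : ℕ}
    (h : (n : ℚ) = Nat.ofDigits (3 / 2 : ℚ) L) : L.sum = s n := by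
  induction L generalizing n with
  | nil =>
    rw [Nat.ofDigits] at h
    obtain rfl : n = 0 := by exact_mod_cast h
    simp [s]
  | cons d L ih =>
    obtain ⟨hmod, htail⟩ :=
      mod_three_eq_and_of_natCast_eq_ofDigits_cons (hL d List.mem_cons_self) h
    rw [s_eq_mod_add, hmod, List.sum_cons,
      ih (fun x hx => hL x (List.mem_cons_of_mem d hx)) htail]

theorem afs_sumDigits_general (N : ℕ) (ds : List ℕ)
    (h : IsAFSRep N ds) : ds.sum = s (2 * N) := by
  obtain ⟨hds, hN⟩ := h
  apply sum_eq_s_of_natCast_eq_ofDigits hds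
  rw [Nat.ofDigits_eq_sum_range_getD, Nat.cast_mul, hN, Finset.mul_sum]
  exact Finset.sum_congr rfl fun i _ => by ring

/-- For `N ≥ 1`, the digit sum of any base-1/2·3/2 representation of `N`
equals `s (2N)`, the base-3/2 sum of digits of `2N`. -/
theorem afs_sumDigits (N : ℕ) (hN : 1 ≤ N) (ds : List ℕ)
    (h : IsAFSRep N ds) : ds.sum = s (2 * N) :=
  afs_sumDigits_general N ds h
end

section
/- Let T'(N) = s(2N) mod 2, where s(0) = 0 and s(N) = (N mod 3) + s(2·⌊N/3⌋) for N ≥ 1 (so T' is the sum of digits modulo 2 of the base-1/2·3/2 representation). Then T'(0) = 0, T'(1) = 0, and for every natural number k: T'(3k) = T'(2k), T'(3k + 1) = T'(2k), and T'(3k + 2) = (T'(2k + 1) + 1) mod 2. Equivalently, T' is the fixed point with prefix 00 of the 2-3-block substitution κ' on {0,1} given by κ'(00) = 001, κ'(01) = 000, κ'(10) = 111, κ'(11) = 110. -/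
/-- The sum of digits modulo 2 of the base-1/2·3/2 representation of `N`. -/
def T' (N : ℕ) : ℕ := s (2 * N) % 2

lemma s_pos (N : ℕ) (h : N ≠ 0) : s N = N % 3 + s (2 * (N / 3)) := by
  cases N with
  | zero => exact absurd rfl h
  | succ n => rw [s]

/-- `T' 0 = 0`, `T' 1 = 0`, and for all `k`: `T' (3k) = T' (2k)`,
`T' (3k+1) = T' (2k)`, `T' (3k+2) = (T' (2k+1) + 1) % 2`; i.e., `T'` is the
fixed point with prefix `00` of the 2-3-block substitution `κ'` on `{0,1}`
given by `κ'(00) = 001`, `κ'(01) = 000`, `κ'(10) = 111`, `κ'(11) = 110`. -/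
theorem afs_thueMorse_fixedPoint :
    T' 0 = 0 ∧ T' 1 = 0 ∧
      ∀ k : ℕ,
        T' (3 * k) = T' (2 * k) ∧
        T' (3 * k + 1) = T' (2 * k) ∧
        T' (3 * k + 2) = (T' (2 * k + 1) + 1) % 2 := by
  have s0 : s 0 = 0 := by rw [s]
  have t1 : T' 1 = 0 := by
    rw [T', s_pos 2 (by omega)]
    norm_num [s0]
  refine ⟨by rw [T']; norm_num [s0], t1, fun k => ⟨?_, ?_, ?_⟩⟩
  · rcases Nat.eq_zero_or_pos k with rfl | hk
    · rfl
    · unfold T'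
      rw [s_pos (2 * (3 * k)) (by omega)]
      have h1 : 2 * (3 * k) % 3 = 0 := by omega
      have h2 : 2 * (3 * k) / 3 = 2 * k := by omega
      rw [h1, h2, Nat.zero_add]
  · unfold T'
    rw [s_pos (2 * (3 * k + 1)) (by omega)]
    have h1 : 2 * (3 * k + 1) % 3 = 2 := by omega
    have h2 : 2 * (3 * k + 1) / 3 = 2 * k := by omega
    rw [h1, h2]
    omega
  · unfold T'
    rw [s_pos (2 * (3 * k + 2)) (by omega)]
    have h1 : 2 * (3 * k + 2) % 3 = 1 := by omega
    have h2 : 2 * (3 * k + 2) / 3 = 2 * k + 1 := by omega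
    rw [h1, h2]
    omega
end

section
/- Let A be a type, let p, q, r be positive natural numbers, and let x : ℕ → A be a fixed point of a p-q-block substitution σ : (Fin p → A) → (Fin q → A) (meaning: for all k and all j < q, x(q·k + j) = σ(fun i => x(p·k + i))(j)). Then x is also a fixed point of some p·r-q·r-block substitution, i.e., there exists σ_r : (Fin (p·r) → A) → (Fin (q·r) → A) such that for all k and all j < q·r, x(q·r·k + j) = σ_r(fun i => x(p·r·k + i))(j). -/
/-- A sequence `x : ℕ → A` is a fixed point of a `p`-`q`-block substitution
`σ : (Fin p → A) → (Fin q → A)` if for all `k` and all `j : Fin q`,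
`x (q * k + j) = σ (fun i => x (p * k + i)) j`. -/
def IsBlockFixedPoint {A : Type*} {p q : ℕ} (σ : (Fin p → A) → (Fin q → A))
    (x : ℕ → A) : Prop :=
  ∀ (k : ℕ) (j : Fin q), x (q * k + (j : ℕ)) = σ (fun i => x (p * k + (i : ℕ))) j

/-- A fixed point of a `p`-`q`-block substitution is also a fixed point of
some `p·r`-`q·r`-block substitution. -/
theorem blockFixedPoint_mul {A : Type*} (p q r : ℕ) (hp : 0 < p) (hq : 0 < q)
    (hr : 0 < r) (σ : (Fin p → A) → (Fin q → A)) (x : ℕ → A)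
    (hx : IsBlockFixedPoint σ x) :
    ∃ σr : (Fin (p * r) → A) → (Fin (q * r) → A), IsBlockFixedPoint σr x := by
  refine ⟨fun b j => σ (fun i => b ⟨p * ((j : ℕ) / q) + (i : ℕ), ?_⟩)
      ⟨(j : ℕ) % q, Nat.mod_lt _ hq⟩, ?_⟩
  · calc p * ((j : ℕ) / q) + (i : ℕ) < p * ((j : ℕ) / q) + p := by omega
      _ = p * ((j : ℕ) / q + 1) := by ring
      _ ≤ p * r := by
          exact Nat.mul_le_mul_left p (Nat.div_lt_of_lt_mul (by
            have := j.isLt; omega))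
  · intro k j
    have h := hx (r * k + (j : ℕ) / q) ⟨(j : ℕ) % q, Nat.mod_lt _ hq⟩
    simp only at h ⊢
    convert h using 2
    · have := Nat.div_add_mod (j : ℕ) q
      ring_nf
      omega
    · funext i
      congr 1
      ring
end

section
/- Let A be a type, let p, q, r be positive natural numbers, and let x : ℕ → A be a fixed point of a p-q-block substitution σ : (Fin p → A) → (Fin q → A). Then the sequence N ↦ x(r·N) is a coding of a fixed point of a p-q-block substitution: there exist a type B (one may take B = Fin r → A), a p-q-block substitution τ : (Fin p → B) → (Fin q → B), a sequence y : ℕ → B that is a fixed point of τ, and a coding (letter-to-letter map) c : B → A such that c(y(N)) = x(r·N) for all N. -/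
/-- If `x` is a fixed point of a `p`-`q`-block substitution, then for any
positive `r` the sequence `N ↦ x (r * N)` is a coding (letter-to-letter image)
of a fixed point of a `p`-`q`-block substitution on the alphabet
`B = Fin r → A`. -/
theorem blockFixedPoint_coding_subseq {A : Type u} (p q r : ℕ) (hp : 0 < p)
    (hq : 0 < q) (hr : 0 < r) (σ : (Fin p → A) → (Fin q → A)) (x : ℕ → A)
    (hx : IsBlockFixedPoint σ x) :
    ∃ (B : Type u) (τ : (Fin p → B) → (Fin q → B)) (y : ℕ → B) (c : B → A),
      IsBlockFixedPoint τ y ∧ ∀ N : ℕ, c (y N) = x (r * N) := by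
  have hdiv : ∀ (j : Fin q) (t : Fin r), (r * (j : ℕ) + (t : ℕ)) / q < r := by
    intro j t
    apply Nat.div_lt_of_lt_mul
    have hj := j.isLt
    have ht := t.isLt
    nlinarith
  refine ⟨Fin r → A,
    fun b j t =>
      σ (fun i => b
          ⟨(p * ((r * (j : ℕ) + (t : ℕ)) / q) + (i : ℕ)) / r,
            Nat.div_lt_of_lt_mul (by
              have hm := hdiv j t
              have hi := i.isLt
              nlinarith)⟩
          ⟨(p * ((r * (j : ℕ) + (t : ℕ)) / q) + (i : ℕ)) % r, Nat.mod_lt _ hr⟩)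
        ⟨(r * (j : ℕ) + (t : ℕ)) % q, Nat.mod_lt _ hq⟩,
    fun N => fun i => x (r * N + (i : ℕ)),
    fun b => b ⟨0, hr⟩, ?_, fun N => by simp⟩
  intro k j
  funext t
  show x (r * (q * k + (j : ℕ)) + (t : ℕ)) = _
  set n := r * (j : ℕ) + (t : ℕ) with hn
  have key := hx (r * k + n / q) ⟨n % q, Nat.mod_lt _ hq⟩
  have h1 : r * (q * k + (j : ℕ)) + (t : ℕ) = q * (r * k + n / q) + n % q := by
    calc r * (q * k + (j : ℕ)) + (t : ℕ) = q * (r * k) + n := by rw [hn]; ring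
      _ = q * (r * k) + (q * (n / q) + n % q) := by rw [Nat.div_add_mod]
      _ = q * (r * k + n / q) + n % q := by ring
  rw [h1]
  rw [key]
  congr 1
  funext i
  congr 1
  simp only [← hn]
  calc p * (r * k + n / q) + (i : ℕ) = r * (p * k) + (p * (n / q) + (i : ℕ)) := by ring
    _ = r * (p * k) + (r * ((p * (n / q) + (i : ℕ)) / r) + (p * (n / q) + (i : ℕ)) % r) := by
        rw [Nat.div_add_mod]
    _ = r * (p * k + (p * (n / q) + (i : ℕ)) / r) + (p * (n / q) + (i : ℕ)) % r := by ring
end
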